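/- arXiv:2508.03136 — 3 statements merged into one kernel-verified Lean document; each statement's English description precedes it below -/
import Mathlib

section
/- Under Assumption 1, for any stationary policy π : S → Δ(A), the robust average-reward Bellman equation is solvable: there exist a constant g ∈ ℝ and a vector h : S → ℝ such that h(s) = ∑_a π(a|s) ( r(s,a) − g + σ_{𝒫^a_s}(h) ) for every s ∈ S, and moreover g^π_𝒫(s) = g for every s ∈ S (the robust average reward of π is the constant g). -/
/-!
The robust Bellman operator `T_γ V = ∑_a π(a|s) (r(s,a) + γ σ(V))` is monotone and satisfies
`T_γ (V + c) = T_γ V + γ c`, hence is a `γ`-contraction in the sup norm; let `V_γ` be its fixed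
point. For a kernel attaining the support functions, `V_γ ≥ γ P^π V_γ`. Assumption 1 and the
compactness of the uncertainty sets give `δ > 0` such that every kernel has
`(P^π)^k(s,s') ≥ δ` for some `k < |S|`; this bounds the span of `V_γ` uniformly in
`γ ∈ [1/2, 1)`, and a limit point `(h, g)` of `(V_γ - min V_γ, (1 - γ) min V_γ)` as `γ → 1`
solves the average-reward equation `T_1 h = h + g`.

Conversely, that equation gives `g + h ≤ r^π + P^π h` for every kernel in the uncertainty set,
with equality for the minimising one. Telescoping, the Cesàro averages of `r^π` are at least
`g - 2‖h‖/n`, and converge to `g` for the minimising kernel, so the robust average reward is `g`.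
-/

open scoped BigOperators
open Matrix Filter

/-- Support function `σ_Q(V) = min_{p ∈ Q} ∑_{s'} p(s') V(s')` (as an infimum,
which is attained when `Q` is nonempty and compact). -/
noncomputable def suppF {S : Type*} [Fintype S] (Q : Set (S → ℝ)) (V : S → ℝ) : ℝ :=
  sInf ((fun p => ∑ s', p s' * V s') '' Q)

/-- The stochastic matrix `P^π` induced by a stationary policy `π` and a kernel `P`. -/
noncomputable def polMat {S A : Type*} [Fintype S] [Fintype A]
    (π : S → A → ℝ) (P : S → A → S → ℝ) : Matrix S S ℝ :=
  Matrix.of fun s s' => ∑ a, π s a * P s a s'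

/-- The reward vector `r^π`. -/
noncomputable def polRew {S A : Type*} [Fintype A]
    (π : S → A → ℝ) (r : S → A → ℝ) : S → ℝ :=
  fun s => ∑ a, π s a * r s a

/-- The average reward `g^π_P(s) = liminf_n (1/n) ∑_{t<n} ((P^π)^t r^π)(s)`. -/
noncomputable def avgR {S A : Type*} [Fintype S] [DecidableEq S] [Fintype A]
    (π : S → A → ℝ) (P : S → A → S → ℝ) (r : S → A → ℝ) (s : S) : ℝ :=
  Filter.liminf
    (fun n : ℕ => (∑ t ∈ Finset.range n, ((polMat π P ^ t) *ᵥ polRew π r) s) / n)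
    Filter.atTop

/-- The robust average reward `g^π_U(s) = inf_{P ∈ U} g^π_P(s)`. -/
noncomputable def robAvgR {S A : Type*} [Fintype S] [DecidableEq S] [Fintype A]
    (U : S → A → Set (S → ℝ)) (π : S → A → ℝ) (r : S → A → ℝ) (s : S) : ℝ :=
  sInf {x | ∃ P : S → A → S → ℝ, (∀ s' a, P s' a ∈ U s' a) ∧ x = avgR π P r s}

/-- A stochastic matrix is irreducible: all states communicate. -/
def IrredM {S : Type*} [Fintype S] [DecidableEq S] (M : Matrix S S ℝ) : Prop :=
  ∀ s s' : S, ∃ k : ℕ, 1 ≤ k ∧ 0 < (M ^ k) s s'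

/-- Assumption 1: for every deterministic policy `d` and every kernel `P ∈ U`,
the matrix `P^d` is irreducible. -/
def Assump1 {S A : Type*} [Fintype S] [DecidableEq S]
    (U : S → A → Set (S → ℝ)) : Prop :=
  ∀ (d : S → A) (P : S → A → S → ℝ), (∀ s a, P s a ∈ U s a) →
    IrredM (Matrix.of fun s s' => P s (d s) s')

open Finset

def IsUncertaintySet {S : Type*} [Fintype S] (Q : Set (S → ℝ)) : Prop :=
  Q.Nonempty ∧ IsCompact Q ∧ Q ⊆ stdSimplex ℝ S

lemma abs_sub_le_of_monotone_of_map_add_const {ι : Type*} [Fintype ι] {f : (ι → ℝ) → ℝ}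
    {γ : ℝ} (hf : Monotone f) (hadd : ∀ v c, f (v + fun _ => c) = f v + γ * c)
    (v w : ι → ℝ) : |f v - f w| ≤ γ * dist v w := by
  have key : ∀ v w : ι → ℝ, f v ≤ f w + γ * dist v w := fun v w =>
    calc f v ≤ f (w + fun _ => dist v w) := hf fun i => by
          have hvw := Real.dist_eq _ _ ▸ dist_le_pi_dist v w i
          simp only [Pi.add_apply]
          linarith [le_abs_self (v i - w i)]
      _ = f w + γ * dist v w := hadd w _
  have hwv := key w v
  rw [dist_comm] at hwv
  exact abs_sub_le_iff.2 ⟨by linarith [key v w], by linarith⟩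

lemma dotProduct_add_const_of_mem_stdSimplex {S : Type*} [Fintype S] {p : S → ℝ}
    (hp : p ∈ stdSimplex ℝ S) (V : S → ℝ) (c : ℝ) :
    p ⬝ᵥ (V + fun _ => c) = p ⬝ᵥ V + c := by
  rw [dotProduct_add]
  simp [dotProduct, ← sum_mul, hp.2]

namespace IsUncertaintySet

variable {S : Type*} [Fintype S] {Q : Set (S → ℝ)}

lemma exists_suppF_eq (hQ : IsUncertaintySet Q) (V : S → ℝ) :
    ∃ p ∈ Q, p ⬝ᵥ V = suppF Q V :=
  (hQ.2.1.image (continuous_id.dotProduct continuous_const)).sInf_mem (hQ.1.image _)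

lemma suppF_le (hQ : IsUncertaintySet Q) {p : S → ℝ} (hp : p ∈ Q) (V : S → ℝ) :
    suppF Q V ≤ p ⬝ᵥ V :=
  csInf_le (hQ.2.1.image (continuous_id.dotProduct continuous_const)).bddBelow
    (Set.mem_image_of_mem _ hp)

lemma suppF_mono (hQ : IsUncertaintySet Q) : Monotone (suppF Q) := fun V W hVW => by
  obtain ⟨p, hp, hpW⟩ := hQ.exists_suppF_eq W
  exact hpW ▸ (hQ.suppF_le hp V).trans
    (dotProduct_le_dotProduct_of_nonneg_left hVW (hQ.2.2 hp).1)

lemma suppF_add_const (hQ : IsUncertaintySet Q) (V : S → ℝ) (c : ℝ) :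
    suppF Q (V + fun _ => c) = suppF Q V + c := by
  obtain ⟨p, hp, hpVc⟩ := hQ.exists_suppF_eq (V + fun _ => c)
  obtain ⟨q, hq, hqV⟩ := hQ.exists_suppF_eq V
  have hp' := dotProduct_add_const_of_mem_stdSimplex (hQ.2.2 hp) V c
  have hq' := dotProduct_add_const_of_mem_stdSimplex (hQ.2.2 hq) V c
  linarith [hQ.suppF_le hp V, hQ.suppF_le hq (V + fun _ => c)]

lemma suppF_zero (hQ : IsUncertaintySet Q) : suppF Q 0 = 0 := by
  simp only [suppF, Pi.zero_apply, mul_zero, sum_const_zero, hQ.1.image_const, csInf_singleton]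

lemma continuous_suppF (hQ : IsUncertaintySet Q) : Continuous (suppF Q) :=
  (LipschitzWith.of_dist_le_mul (K := 1) fun V W => by
    rw [Real.dist_eq, NNReal.coe_one]
    exact abs_sub_le_of_monotone_of_map_add_const hQ.suppF_mono
      (fun V c => by rw [hQ.suppF_add_const, one_mul]) V W).continuous

end IsUncertaintySet

namespace Matrix

variable {n : Type*} [Fintype n] [DecidableEq n]

open Polynomial in
/-- By Cayley–Hamilton every power of `M` is a combination of `M ^ k` with `k < card n`. -/
lemma pow_apply_eq_zero_of_forall_lt_card {R : Type*} [CommRing R] [Nontrivial R]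
    {M : Matrix n n R} {i j : n} (h : ∀ k < Fintype.card n, (M ^ k) i j = 0) (k : ℕ) :
    (M ^ k) i j = 0 := by
  have hcard : 0 < Fintype.card n := Fintype.card_pos_iff.2 ⟨i⟩
  have hχ : M.charpoly ≠ 1 := fun h1 => by
    have := charpoly_natDegree_eq_dim M
    rw [h1, natDegree_one] at this
    omega
  rw [pow_eq_aeval_mod_charpoly, aeval_eq_sum_range'
    ((natDegree_modByMonic_lt _ (charpoly_monic M) hχ).trans_eq (charpoly_natDegree_eq_dim M))]
  simp only [sum_apply, smul_apply, smul_eq_mul]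
  exact sum_eq_zero fun k hk => by rw [h k (mem_range.1 hk), mul_zero]

variable {M : Matrix n n ℝ}

lemma mulVec_mono_of_mem_rowStochastic (hM : M ∈ rowStochastic ℝ n) :
    Monotone (M *ᵥ ·) := fun v w hvw i => by
  have := nonneg_mulVec_of_mem_rowStochastic hM (x := w - v) (fun j => sub_nonneg.2 (hvw j)) i
  rwa [mulVec_sub, Pi.sub_apply, sub_nonneg] at this

lemma mulVec_const_of_mem_rowStochastic (hM : M ∈ rowStochastic ℝ n) (c : ℝ) :
    (M *ᵥ fun _ => c) = fun _ => c := by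
  funext i
  simp [mulVec, dotProduct, ← sum_mul, sum_row_of_mem_rowStochastic hM]

lemma mulVec_add_const_of_mem_rowStochastic (hM : M ∈ rowStochastic ℝ n) (v : n → ℝ) (c : ℝ) :
    (M *ᵥ (v + fun _ => c)) = M *ᵥ v + fun _ => c := by
  rw [mulVec_add, mulVec_const_of_mem_rowStochastic hM]

lemma abs_mulVec_apply_le_norm (hM : M ∈ rowStochastic ℝ n) (v : n → ℝ) (i : n) :
    |(M *ᵥ v) i| ≤ ‖v‖ := by
  have hv : ∀ j, |v j| ≤ ‖v‖ := fun j => Real.norm_eq_abs (v j) ▸ norm_le_pi_norm v j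
  have key : ∀ u : n → ℝ, (∀ j, u j ≤ ‖v‖) → (M *ᵥ u) i ≤ ‖v‖ := fun u hu => by
    simpa only [mulVec_const_of_mem_rowStochastic hM] using
      mulVec_mono_of_mem_rowStochastic hM hu i
  have hneg := key (-v) fun j => (neg_le_abs (v j)).trans (hv j)
  rw [mulVec_neg, Pi.neg_apply] at hneg
  exact abs_le.2 ⟨by linarith, key v fun j => (le_abs_self _).trans (hv j)⟩

lemma pow_mulVec_le_of_mulVec_le (hM : M ∈ rowStochastic ℝ n) {γ c : ℝ} (hγ0 : 0 ≤ γ)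
    (hγ1 : γ ≤ 1) {w : n → ℝ} (hw : ∀ i, γ * (M *ᵥ w) i ≤ w i + c) (k : ℕ) (i : n) :
    γ ^ k * (M ^ k *ᵥ w) i ≤ w i + k * |c| := by
  induction k generalizing i with
  | zero => simp
  | succ k ih =>
    have hMk := pow_mem hM k
    have hstep : (M ^ k *ᵥ (γ • (M *ᵥ w))) i ≤ (M ^ k *ᵥ (w + fun _ => c)) i :=
      mulVec_mono_of_mem_rowStochastic hMk (fun j => hw j) i
    rw [mulVec_add_const_of_mem_rowStochastic hMk, Pi.add_apply] at hstep
    have hγk : γ ^ k * c ≤ |c| :=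
      (mul_le_mul_of_nonneg_left (le_abs_self c) (pow_nonneg hγ0 k)).trans
        (mul_le_of_le_one_left (abs_nonneg c) (pow_le_one₀ hγ0 hγ1))
    calc γ ^ (k + 1) * (M ^ (k + 1) *ᵥ w) i = γ ^ k * (M ^ k *ᵥ (γ • (M *ᵥ w))) i := by
          rw [mulVec_smul, Pi.smul_apply, smul_eq_mul, mulVec_mulVec, ← pow_succ, pow_succ γ]
          ring
      _ ≤ γ ^ k * ((M ^ k *ᵥ w) i + c) := mul_le_mul_of_nonneg_left hstep (pow_nonneg hγ0 k)
      _ ≤ w i + (k + 1 : ℕ) * |c| := by push_cast; linarith [ih i]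

lemma pow_mul_pow_apply_mul_le_of_mulVec_le (hM : M ∈ rowStochastic ℝ n) {γ c : ℝ}
    (hγ0 : 0 ≤ γ) (hγ1 : γ ≤ 1) {w : n → ℝ} (hw0 : 0 ≤ w)
    (hw : ∀ i, γ * (M *ᵥ w) i ≤ w i + c) (k : ℕ) (i j : n) :
    γ ^ k * (M ^ k) i j * w j ≤ w i + k * |c| := by
  have hterm : (M ^ k) i j * w j ≤ (M ^ k *ᵥ w) i :=
    single_le_sum (f := fun l => (M ^ k) i l * w l)
      (fun l _ => mul_nonneg (nonneg_of_mem_rowStochastic (pow_mem hM k)) (hw0 l)) (mem_univ j)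
  rw [mul_assoc]
  exact (mul_le_mul_of_nonneg_left hterm (pow_nonneg hγ0 k)).trans
    (pow_mulVec_le_of_mulVec_le hM hγ0 hγ1 hw k i)

noncomputable def cesaroAvg (M : Matrix n n ℝ) (r : n → ℝ) (i : n) (N : ℕ) : ℝ :=
  (∑ t ∈ range N, (M ^ t *ᵥ r) i) / N

lemma abs_cesaroAvg_le (hM : M ∈ rowStochastic ℝ n) (r : n → ℝ) (i : n) (N : ℕ) :
    |cesaroAvg M r i N| ≤ ‖r‖ := by
  rcases N.eq_zero_or_pos with rfl | hN
  · simp [cesaroAvg]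
  rw [cesaroAvg, abs_div, Nat.abs_cast, div_le_iff₀ (by exact_mod_cast hN)]
  calc |∑ t ∈ range N, (M ^ t *ᵥ r) i| ≤ ∑ t ∈ range N, ‖r‖ :=
        (abs_sum_le_sum_abs _ _).trans
          (sum_le_sum fun t _ => abs_mulVec_apply_le_norm (pow_mem hM t) r i)
    _ = ‖r‖ * N := by rw [sum_const, card_range, nsmul_eq_mul, mul_comm]

lemma sub_le_sum_pow_mulVec (hM : M ∈ rowStochastic ℝ n) {g : ℝ} {r h : n → ℝ}
    (hgh : ∀ i, g + h i ≤ r i + (M *ᵥ h) i) (N : ℕ) (i : n) :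
    N * g + h i - (M ^ N *ᵥ h) i ≤ ∑ t ∈ range N, (M ^ t *ᵥ r) i := by
  induction N with
  | zero => simp
  | succ N ih =>
    have hMN := pow_mem hM N
    have hstep : (M ^ N *ᵥ (h + fun _ => g)) i ≤ (M ^ N *ᵥ (r + M *ᵥ h)) i :=
      mulVec_mono_of_mem_rowStochastic hMN (fun j => by simpa [add_comm] using hgh j) i
    rw [mulVec_add_const_of_mem_rowStochastic hMN, mulVec_add, mulVec_mulVec, ← pow_succ]
      at hstep
    simp only [Pi.add_apply] at hstep
    rw [sum_range_succ]
    push_cast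
    linarith

lemma sub_le_cesaroAvg (hM : M ∈ rowStochastic ℝ n) {g : ℝ} {r h : n → ℝ}
    (hgh : ∀ i, g + h i ≤ r i + (M *ᵥ h) i) {N : ℕ} (hN : N ≠ 0) (i : n) :
    g - 2 * ‖h‖ / N ≤ cesaroAvg M r i N := by
  have hN' : (0 : ℝ) < N := by exact_mod_cast Nat.pos_of_ne_zero hN
  have hhi : |h i| ≤ ‖h‖ := Real.norm_eq_abs (h i) ▸ norm_le_pi_norm h i
  have hMh := abs_mulVec_apply_le_norm (pow_mem hM N) h i
  rw [cesaroAvg, sub_div' hN'.ne', div_le_div_iff_of_pos_right hN', mul_comm]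
  linarith [sub_le_sum_pow_mulVec hM hgh N i, neg_abs_le (h i), le_abs_self ((M ^ N *ᵥ h) i)]

lemma le_liminf_cesaroAvg (hM : M ∈ rowStochastic ℝ n) {g : ℝ} {r h : n → ℝ}
    (hgh : ∀ i, g + h i ≤ r i + (M *ᵥ h) i) (i : n) :
    g ≤ liminf (cesaroAvg M r i) atTop := by
  have hlow : Tendsto (fun N : ℕ => g - 2 * ‖h‖ / N) atTop (nhds g) := by
    simpa using (tendsto_const_div_atTop_nhds_zero_nat (2 * ‖h‖)).const_sub g
  calc g = liminf (fun N : ℕ => g - 2 * ‖h‖ / N) atTop := hlow.liminf_eq.symm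
    _ ≤ liminf (cesaroAvg M r i) atTop :=
      liminf_le_liminf
        (eventually_ne_atTop 0 |>.mono fun N hN => sub_le_cesaroAvg hM hgh hN i)
        hlow.isBoundedUnder_ge
        (isBoundedUnder_of ⟨‖r‖, fun N => (le_abs_self _).trans (abs_cesaroAvg_le hM r i N)⟩
          |>.isCoboundedUnder_ge)

lemma tendsto_cesaroAvg (hM : M ∈ rowStochastic ℝ n) {g : ℝ} {r h : n → ℝ}
    (hgh : ∀ i, g + h i = r i + (M *ᵥ h) i) (i : n) :
    Tendsto (cesaroAvg M r i) atTop (nhds g) := by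
  have hneg : ∀ i, -g + (-h) i ≤ (-r) i + (M *ᵥ -h) i := fun i => by
    simp only [mulVec_neg, Pi.neg_apply]; linarith [hgh i]
  have hlim : ∀ c : ℝ, Tendsto (fun N : ℕ => c - 2 * ‖h‖ / N) atTop (nhds c) := fun c => by
    simpa using (tendsto_const_div_atTop_nhds_zero_nat (2 * ‖h‖)).const_sub c
  refine tendsto_of_tendsto_of_tendsto_of_le_of_le' (hlim g) (by simpa using (hlim (-g)).neg)
    (eventually_ne_atTop 0 |>.mono fun N hN => sub_le_cesaroAvg hM (fun i => (hgh i).le) hN i)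
    (eventually_ne_atTop 0 |>.mono fun N hN => ?_)
  have := sub_le_cesaroAvg hM hneg hN i
  simp only [cesaroAvg, mulVec_neg, Pi.neg_apply, sum_neg_distrib, norm_neg] at this ⊢
  linarith [neg_div (N : ℝ) (∑ t ∈ range N, (M ^ t *ᵥ r) i)]

end Matrix


section Irreducible

variable {n : Type*} [Fintype n] [DecidableEq n]

lemma IrredM.exists_lt_card_pow_apply_pos {M : Matrix n n ℝ} (hM0 : ∀ i j, 0 ≤ M i j)
    (hM : IrredM M) (i j : n) : ∃ k < Fintype.card n, 0 < (M ^ k) i j := by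
  by_contra! hle
  obtain ⟨k, -, hk⟩ := hM i j
  have := Matrix.pow_apply_eq_zero_of_forall_lt_card
    (fun k hk => le_antisymm (hle k hk) (Matrix.pow_apply_nonneg hM0 k i j)) k
  linarith

lemma IrredM.of_pos_imp_pos {B M : Matrix n n ℝ} (hB0 : ∀ i j, 0 ≤ B i j)
    (hM0 : ∀ i j, 0 ≤ M i j) (hBM : ∀ i j, 0 < B i j → 0 < M i j) (hB : IrredM B) :
    IrredM M := by
  have hpow : ∀ k i j, 0 < (B ^ k) i j → 0 < (M ^ k) i j := by
    intro k
    induction k with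
    | zero => exact fun i j h => by simpa using h
    | succ k ih =>
      intro i j hpos
      rw [pow_succ, Matrix.mul_apply] at hpos ⊢
      obtain ⟨l, -, hl⟩ := (sum_pos_iff_of_nonneg fun l _ =>
        mul_nonneg (Matrix.pow_apply_nonneg hB0 k i l) (hB0 l j)).1 hpos
      have hBk := pos_of_mul_pos_left hl (hB0 l j)
      have hBl := pos_of_mul_pos_right hl hBk.le
      exact (mul_pos (ih i l hBk) (hBM l j hBl)).trans_le (single_le_sum
        (f := fun l => (M ^ k) i l * M l j)
        (fun l _ => mul_nonneg (Matrix.pow_apply_nonneg hM0 k i l) (hM0 l j)) (mem_univ l))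
  intro i j
  obtain ⟨k, hk, hpos⟩ := hB i j
  exact ⟨k, hk, hpow k i j hpos⟩

lemma IsCompact.exists_pos_le_pow_apply {𝓜 : Set (Matrix n n ℝ)} (hcpt : IsCompact 𝓜)
    (hirr : ∀ M ∈ 𝓜, (∀ i j, 0 ≤ M i j) ∧ IrredM M) :
    ∃ δ > 0, ∀ M ∈ 𝓜, ∀ i j, ∃ k < Fintype.card n, δ ≤ (M ^ k) i j := by
  have hpair : ∀ i j, ∀ᶠ δ in nhdsWithin (0 : ℝ) (Set.Ioi 0),
      ∀ M ∈ 𝓜, ∃ k < Fintype.card n, δ ≤ (M ^ k) i j := by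
    intro i j
    have hne : (range (Fintype.card n)).Nonempty :=
      nonempty_range_iff.2 (Fintype.card_pos_iff.2 ⟨i⟩).ne'
    have hcont : Continuous fun M : Matrix n n ℝ => (range _).sup' hne fun k => (M ^ k) i j :=
      Continuous.finset_sup'_apply hne fun k _ => (continuous_id.pow k).matrix_elem i j
    obtain ⟨δ, hδ, hle⟩ := hcpt.exists_forall_le' hcont.continuousOn (a := 0) fun M hM => by
      obtain ⟨k, hk, hpos⟩ := (hirr M hM).2.exists_lt_card_pow_apply_pos (hirr M hM).1 i j
      exact (lt_sup'_iff hne).2 ⟨k, mem_range.2 hk, hpos⟩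
    filter_upwards [Ioc_mem_nhdsGT hδ] with δ' hδ' M hM
    obtain ⟨k, hk, hk'⟩ := (le_sup'_iff hne).1 (hδ'.2.trans (hle M hM))
    exact ⟨k, mem_range.1 hk, hk'⟩
  obtain ⟨δ, hδ, hall⟩ :=
    (eventually_mem_nhdsWithin.and (eventually_all.2 fun i => eventually_all.2 (hpair i))).exists
  exact ⟨δ, hδ, fun M hM i j => hall i j M hM⟩

end Irreducible

lemma polMat_mulVec_apply {S A : Type*} [Fintype S] [Fintype A] (π : S → A → ℝ)
    (P : S → A → S → ℝ) (V : S → ℝ) (s : S) :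
    (polMat π P *ᵥ V) s = ∑ a, π s a * (P s a ⬝ᵥ V) := by
  simp only [polMat, mulVec, dotProduct, of_apply, sum_mul, mul_sum, mul_assoc]
  exact sum_comm

section Policy

variable {S A : Type*} [Fintype S] [DecidableEq S] [Fintype A] {π : S → A → ℝ}
  {P : S → A → S → ℝ} {U : S → A → Set (S → ℝ)}

lemma polMat_mem_rowStochastic (hπ : ∀ s, π s ∈ stdSimplex ℝ A)
    (hP : ∀ s a, P s a ∈ stdSimplex ℝ S) : polMat π P ∈ rowStochastic ℝ S := by
  refine mem_rowStochastic.2 ⟨fun s s' => sum_nonneg fun a _ =>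
    mul_nonneg ((hπ s).1 a) ((hP s a).1 s'), funext fun s => ?_⟩
  simp [polMat_mulVec_apply, dotProduct_one, (hP s _).2, (hπ s).2]

lemma irredM_polMat (hπ : ∀ s, π s ∈ stdSimplex ℝ A) (hP : ∀ s a, P s a ∈ stdSimplex ℝ S)
    (hirr : ∀ d : S → A, IrredM (of fun s s' => P s (d s) s')) : IrredM (polMat π P) := by
  have hsupp : ∀ s, ∃ a, 0 < π s a := fun s => by
    obtain ⟨a, -, ha⟩ := (sum_pos_iff_of_nonneg fun a _ => (hπ s).1 a).1
      ((hπ s).2 ▸ one_pos)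
    exact ⟨a, ha⟩
  choose d hd using hsupp
  refine IrredM.of_pos_imp_pos (fun s s' => (hP s (d s)).1 s')
    (fun _ _ => nonneg_of_mem_rowStochastic (polMat_mem_rowStochastic hπ hP))
    (fun s s' hB => ?_) (hirr d)
  exact (mul_pos (hd s) hB).trans_le (single_le_sum (f := fun a => π s a * P s a s')
    (fun a _ => mul_nonneg ((hπ s).1 a) ((hP s a).1 s')) (mem_univ (d s)))

lemma exists_pos_le_pow_polMat (hU : ∀ s a, IsUncertaintySet (U s a)) (hirr : Assump1 U)
    (hπ : ∀ s, π s ∈ stdSimplex ℝ A) :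
    ∃ δ > 0, ∀ P : S → A → S → ℝ, (∀ s a, P s a ∈ U s a) →
      ∀ s s', ∃ k < Fintype.card S, δ ≤ (polMat π P ^ k) s s' := by
  have hcont : Continuous fun P : S → A → S → ℝ => polMat π P :=
    continuous_matrix fun s s' => continuous_finsetSum _ fun a _ =>
      continuous_const.mul ((continuous_apply s').comp (continuous_apply_apply s a))
  have hK : IsCompact (Set.univ.pi fun s => Set.univ.pi fun a => U s a) :=
    isCompact_univ_pi fun s => isCompact_univ_pi fun a => (hU s a).2.1
  obtain ⟨δ, hδ, hle⟩ := (hK.image hcont).exists_pos_le_pow_apply <| by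
    rintro _ ⟨P, hP, rfl⟩
    have hP' : ∀ s a, P s a ∈ U s a := fun s a => hP s trivial a trivial
    have hPS : ∀ s a, P s a ∈ stdSimplex ℝ S := fun s a => (hU s a).2.2 (hP' s a)
    exact ⟨fun _ _ => nonneg_of_mem_rowStochastic (polMat_mem_rowStochastic hπ hPS),
      irredM_polMat hπ hPS fun d => hirr d P hP'⟩
  exact ⟨δ, hδ, fun P hP => hle _ ⟨P, fun s _ a _ => hP s a, rfl⟩⟩

end Policy

noncomputable def robustBellman {S A : Type*} [Fintype S] [Fintype A]
    (U : S → A → Set (S → ℝ)) (π r : S → A → ℝ) (γ : ℝ) (V : S → ℝ) : S → ℝ :=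
  fun s => ∑ a, π s a * (r s a + γ * suppF (U s a) V)

lemma norm_polRew_le_one {S A : Type*} [Fintype S] [Fintype A] {π r : S → A → ℝ}
    (hπ : ∀ s, π s ∈ stdSimplex ℝ A) (hr : ∀ s a, r s a ∈ Set.Icc (0 : ℝ) 1) :
    ‖polRew π r‖ ≤ 1 := by
  refine (pi_norm_le_iff_of_nonneg zero_le_one).2 fun s => ?_
  have h0 : 0 ≤ polRew π r s := sum_nonneg fun a _ => mul_nonneg ((hπ s).1 a) (hr s a).1
  have h1 : polRew π r s ≤ 1 :=
    (sum_le_sum fun a _ => mul_le_of_le_one_right ((hπ s).1 a) (hr s a).2).trans (hπ s).2.le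
  rw [Real.norm_eq_abs, abs_le]
  constructor <;> linarith

section RobustBellman

variable {S A : Type*} [Fintype S] [Fintype A] {π r : S → A → ℝ} {U : S → A → Set (S → ℝ)}
  {γ : ℝ}

lemma polRew_add_mul_polMat_mulVec (P : S → A → S → ℝ) (V : S → ℝ) (s : S) :
    polRew π r s + γ * (polMat π P *ᵥ V) s = ∑ a, π s a * (r s a + γ * (P s a ⬝ᵥ V)) := by
  simp only [polRew, polMat_mulVec_apply, mul_sum, ← sum_add_distrib]
  exact sum_congr rfl fun a _ => by ring

lemma robustBellman_le (hπ : ∀ s, π s ∈ stdSimplex ℝ A) (hU : ∀ s a, IsUncertaintySet (U s a))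
    (hγ : 0 ≤ γ) {P : S → A → S → ℝ} (hP : ∀ s a, P s a ∈ U s a) (V : S → ℝ) (s : S) :
    robustBellman U π r γ V s ≤ polRew π r s + γ * (polMat π P *ᵥ V) s := by
  rw [polRew_add_mul_polMat_mulVec]
  exact sum_le_sum fun a _ => mul_le_mul_of_nonneg_left
    (by gcongr; exact (hU s a).suppF_le (hP s a) V) ((hπ s).1 a)

lemma exists_robustBellman_eq (hU : ∀ s a, IsUncertaintySet (U s a)) (V : S → ℝ) :
    ∃ P : S → A → S → ℝ, (∀ s a, P s a ∈ U s a) ∧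
      ∀ γ s, robustBellman U π r γ V s = polRew π r s + γ * (polMat π P *ᵥ V) s := by
  choose P hP hPV using fun s a => (hU s a).exists_suppF_eq V
  exact ⟨P, hP, fun γ s => by simp only [polRew_add_mul_polMat_mulVec, hPV, robustBellman]⟩

lemma robustBellman_mono (hπ : ∀ s, π s ∈ stdSimplex ℝ A)
    (hU : ∀ s a, IsUncertaintySet (U s a)) (hγ : 0 ≤ γ) :
    Monotone (robustBellman U π r γ) := fun V W hVW s =>
  sum_le_sum fun a _ => mul_le_mul_of_nonneg_left
    (by gcongr; exact (hU s a).suppF_mono hVW) ((hπ s).1 a)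

lemma robustBellman_add_const (hπ : ∀ s, π s ∈ stdSimplex ℝ A)
    (hU : ∀ s a, IsUncertaintySet (U s a)) (V : S → ℝ) (c : ℝ) :
    robustBellman U π r γ (V + fun _ => c) = robustBellman U π r γ V + fun _ => γ * c := by
  funext s
  have hsum : ∑ a, π s a * (γ * c) = γ * c := by rw [← sum_mul, (hπ s).2, one_mul]
  simp only [robustBellman, Pi.add_apply]
  rw [← hsum, ← sum_add_distrib]
  exact sum_congr rfl fun a _ => by rw [(hU s a).suppF_add_const]; ring

lemma robustBellman_zero (hU : ∀ s a, IsUncertaintySet (U s a)) :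
    robustBellman U π r γ 0 = polRew π r := by
  funext s
  simp [robustBellman, polRew, (hU s _).suppF_zero]

lemma dist_robustBellman_le (hπ : ∀ s, π s ∈ stdSimplex ℝ A)
    (hU : ∀ s a, IsUncertaintySet (U s a)) (hγ : 0 ≤ γ) (V W : S → ℝ) :
    dist (robustBellman U π r γ V) (robustBellman U π r γ W) ≤ γ * dist V W :=
  (dist_pi_le_iff (mul_nonneg hγ dist_nonneg)).2 fun s => by
    rw [Real.dist_eq]
    exact abs_sub_le_of_monotone_of_map_add_const
      (fun V W hVW => robustBellman_mono hπ hU hγ hVW s)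
      (fun V c => congrFun (robustBellman_add_const hπ hU V c) s) V W

lemma exists_robustBellman_eq_self (hπ : ∀ s, π s ∈ stdSimplex ℝ A)
    (hU : ∀ s a, IsUncertaintySet (U s a)) (hγ0 : 0 ≤ γ) (hγ1 : γ < 1) :
    ∃ V, robustBellman U π r γ V = V ∧ (1 - γ) * ‖V‖ ≤ ‖polRew π r‖ := by
  have hT : ContractingWith ⟨γ, hγ0⟩ (robustBellman U π r γ) :=
    ⟨hγ1, LipschitzWith.of_dist_le_mul (dist_robustBellman_le hπ hU hγ0)⟩
  refine ⟨_, hT.fixedPoint_isFixedPt, ?_⟩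
  have h := hT.dist_fixedPoint_le 0
  rw [robustBellman_zero hU, dist_zero_left, dist_zero_left] at h
  change _ ≤ _ / (1 - γ) at h
  rw [le_div_iff₀ (sub_pos.2 hγ1)] at h
  linarith

lemma continuous_robustBellman (hU : ∀ s a, IsUncertaintySet (U s a)) :
    Continuous fun p : ℝ × (S → ℝ) => robustBellman U π r p.1 p.2 :=
  continuous_pi fun s => continuous_finsetSum _ fun a _ => continuous_const.mul
    (continuous_const.add (continuous_fst.mul ((hU s a).continuous_suppF.comp continuous_snd)))

lemma sum_mul_sub_add_suppF_eq (hπ : ∀ s, π s ∈ stdSimplex ℝ A) (g : ℝ) (h : S → ℝ) (s : S) :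
    ∑ a, π s a * (r s a - g + suppF (U s a) h) = robustBellman U π r 1 h s - g := by
  simp only [robustBellman, one_mul, mul_add, mul_sub, sum_add_distrib, sum_sub_distrib,
    ← sum_mul, (hπ s).2]
  ring

end RobustBellman

section Gain

variable {S A : Type*} [Fintype S] [DecidableEq S] [Fintype A] {π r : S → A → ℝ}
  {U : S → A → Set (S → ℝ)}

lemma robAvgR_eq_of_robustBellman_eq (hπ : ∀ s, π s ∈ stdSimplex ℝ A)
    (hU : ∀ s a, IsUncertaintySet (U s a)) {g : ℝ} {h : S → ℝ}
    (hgh : robustBellman U π r 1 h = h + fun _ => g) (s : S) : robAvgR U π r s = g := by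
  have hstoch : ∀ P : S → A → S → ℝ, (∀ s a, P s a ∈ U s a) → polMat π P ∈ rowStochastic ℝ S :=
    fun P hP => polMat_mem_rowStochastic hπ fun s a => (hU s a).2.2 (hP s a)
  have hbell : ∀ s, g + h s = robustBellman U π r 1 h s := fun s => by
    rw [hgh, Pi.add_apply, add_comm]
  obtain ⟨P₀, hP₀, hP₀h⟩ := exists_robustBellman_eq (r := r) hU h
  refine IsLeast.csInf_eq ⟨⟨P₀, hP₀, ?_⟩, ?_⟩
  · exact (tendsto_cesaroAvg (hstoch P₀ hP₀)
      (fun s => by rw [hbell, hP₀h, one_mul]) s).liminf_eq.symm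
  · rintro _ ⟨P, hP, rfl⟩
    exact le_liminf_cesaroAvg (hstoch P hP) (fun s => (hbell s).trans_le
      (by simpa using robustBellman_le hπ hU zero_le_one hP h s)) s

lemma sub_le_of_robustBellman_eq_self (hπ : ∀ s, π s ∈ stdSimplex ℝ A)
    (hU : ∀ s a, IsUncertaintySet (U s a)) (hr : ∀ s a, 0 ≤ r s a) {δ : ℝ} (hδ : 0 < δ)
    (hreach : ∀ P : S → A → S → ℝ, (∀ s a, P s a ∈ U s a) →
      ∀ s s', ∃ k < Fintype.card S, δ ≤ (polMat π P ^ k) s s')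
    {γ : ℝ} (hγ : 1 / 2 ≤ γ) (hγ1 : γ < 1) {V : S → ℝ} (hV : robustBellman U π r γ V = V)
    {s₀ : S} (hs₀ : ∀ s, V s₀ ≤ V s) (hc : |(1 - γ) * V s₀| ≤ 1) (s : S) :
    V s - V s₀ ≤ Fintype.card S * 2 ^ Fintype.card S / δ := by
  obtain ⟨P, hP, hPV⟩ := exists_robustBellman_eq (r := r) hU V
  have hM := polMat_mem_rowStochastic hπ fun s a => (hU s a).2.2 (hP s a)
  set w : S → ℝ := V + fun _ => -V s₀
  have hw0 : 0 ≤ w := fun s => by simp [w, hs₀ s]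
  have hw : ∀ i, γ * (polMat π P *ᵥ w) i ≤ w i + (1 - γ) * V s₀ := fun i => by
    have hVi := hPV γ i
    rw [hV] at hVi
    have hr0 : 0 ≤ polRew π r i := sum_nonneg fun a _ => mul_nonneg ((hπ i).1 a) (hr i a)
    simp only [w, mulVec_add_const_of_mem_rowStochastic hM, Pi.add_apply]
    linarith
  obtain ⟨k, hk, hδk⟩ := hreach P hP s₀ s
  have hkey := pow_mul_pow_apply_mul_le_of_mulVec_le hM (by linarith) hγ1.le hw0 hw k s₀ s
  have hγk : (1 / 2) ^ Fintype.card S ≤ γ ^ k :=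
    (pow_le_pow_left₀ (by norm_num) hγ _).trans (pow_le_pow_of_le_one (by linarith) hγ1.le hk.le)
  have hk' : (k : ℝ) * |(1 - γ) * V s₀| ≤ Fintype.card S := by
    have : (k : ℝ) ≤ Fintype.card S := by exact_mod_cast hk.le
    nlinarith [abs_nonneg ((1 - γ) * V s₀), Nat.cast_nonneg (α := ℝ) k]
  have hws : w s = V s - V s₀ := by simp [w, sub_eq_add_neg]
  have hw₀ : w s₀ = 0 := by simp [w]
  rw [← hws, le_div_iff₀ hδ]
  calc w s * δ = 2 ^ Fintype.card S * ((1 / 2) ^ Fintype.card S * δ * w s) := by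
        rw [one_div, inv_pow]; field_simp
    _ ≤ 2 ^ Fintype.card S * (γ ^ k * (polMat π P ^ k) s₀ s * w s) := by
        gcongr
        exact hw0 s
    _ ≤ 2 ^ Fintype.card S * Fintype.card S := by gcongr; linarith
    _ = Fintype.card S * 2 ^ Fintype.card S := mul_comm _ _

end Gain

section Existence

variable {S A : Type*} [Fintype S] [DecidableEq S] [Nonempty S] [Fintype A] {π r : S → A → ℝ}
  {U : S → A → Set (S → ℝ)}

lemma exists_robustBellman_eq_add_const_mem_Icc (hr : ∀ s a, r s a ∈ Set.Icc (0 : ℝ) 1)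
    (hU : ∀ s a, IsUncertaintySet (U s a)) (hπ : ∀ s, π s ∈ stdSimplex ℝ A) {δ : ℝ}
    (hδ : 0 < δ) (hreach : ∀ P : S → A → S → ℝ, (∀ s a, P s a ∈ U s a) →
      ∀ s s', ∃ k < Fintype.card S, δ ≤ (polMat π P ^ k) s s')
    {γ : ℝ} (hγ : 1 / 2 ≤ γ) (hγ1 : γ < 1) :
    ∃ (w : S → ℝ) (c : ℝ), robustBellman U π r γ w = w + (fun _ => c) ∧
      (∀ s, w s ∈ Set.Icc 0 (Fintype.card S * 2 ^ Fintype.card S / δ)) ∧ c ∈ Set.Icc (-1) 1 := by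
  obtain ⟨V, hV, hVnorm⟩ := exists_robustBellman_eq_self (r := r) hπ hU (by linarith) hγ1
  obtain ⟨s₀, hs₀⟩ := Finite.exists_min V
  have hgain : |(1 - γ) * V s₀| ≤ 1 := by
    rw [abs_mul, abs_of_pos (sub_pos.2 hγ1)]
    exact (mul_le_mul_of_nonneg_left (Real.norm_eq_abs _ ▸ norm_le_pi_norm V s₀)
      (sub_pos.2 hγ1).le).trans (hVnorm.trans (norm_polRew_le_one hπ hr))
  refine ⟨V + fun _ => -V s₀, (1 - γ) * V s₀, ?_, fun s => ⟨?_, ?_⟩, abs_le.1 hgain⟩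
  · rw [robustBellman_add_const hπ hU, hV]
    funext s
    simp only [Pi.add_apply]
    ring
  · simp [hs₀ s]
  · simpa [← sub_eq_add_neg] using sub_le_of_robustBellman_eq_self hπ hU
      (fun s a => (hr s a).1) hδ hreach hγ hγ1 hV hs₀ hgain s

lemma exists_robustBellman_one_eq_add_const (hr : ∀ s a, r s a ∈ Set.Icc (0 : ℝ) 1)
    (hU : ∀ s a, IsUncertaintySet (U s a)) (hirr : Assump1 U)
    (hπ : ∀ s, π s ∈ stdSimplex ℝ A) :
    ∃ (g : ℝ) (h : S → ℝ), robustBellman U π r 1 h = h + fun _ => g := by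
  obtain ⟨δ, hδ, hreach⟩ := exists_pos_le_pow_polMat hU hirr hπ
  set γ : ℕ → ℝ := fun j => 1 - (1 / 2) ^ (j + 1)
  have hγ : ∀ j, 1 / 2 ≤ γ j ∧ γ j < 1 := fun j => by
    have := pow_le_of_le_one (by norm_num : (0 : ℝ) ≤ 1 / 2) (by norm_num) j.add_one_ne_zero
    exact ⟨by simp only [γ]; linarith, sub_lt_self _ (by positivity)⟩
  have hγlim : Tendsto γ atTop (nhds 1) := by
    simpa [γ] using (tendsto_const_nhds (x := (1 : ℝ))).sub
      ((tendsto_pow_atTop_nhds_zero_of_lt_one (by norm_num) (by norm_num : (1 / 2 : ℝ) < 1)).comp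
        (tendsto_add_atTop_nat 1))
  choose w c hwc hw hc using fun j =>
    exists_robustBellman_eq_add_const_mem_Icc hr hU hπ hδ hreach (hγ j).1 (hγ j).2
  obtain ⟨⟨h, g⟩, -, φ, hφ, hlim⟩ :=
    ((isCompact_univ_pi fun _ => isCompact_Icc).prod isCompact_Icc).tendsto_subseq
      (x := fun j => (w j, c j)) fun j => ⟨fun s _ => hw j s, hc j⟩
  refine ⟨g, h, tendsto_nhds_unique (f := fun j => w (φ j) + fun _ => c (φ j))
    (l := atTop) ?_ ?_⟩
  · exact ((continuous_robustBellman hU).tendsto (1, h)).comp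
      ((hγlim.comp hφ.tendsto_atTop).prodMk_nhds hlim.fst_nhds) |>.congr fun j => hwc (φ j)
  · exact ((continuous_fst.add (continuous_pi fun _ => continuous_snd)).tendsto (h, g)).comp hlim

end Existence

theorem stmt0_general {S A : Type*} [Fintype S] [DecidableEq S] [Nonempty S]
    [Fintype A]
    (r : S → A → ℝ) (hr : ∀ s a, r s a ∈ Set.Icc (0 : ℝ) 1)
    (U : S → A → Set (S → ℝ))
    (hU : ∀ s a, (U s a).Nonempty ∧ IsCompact (U s a) ∧ Convex ℝ (U s a) ∧
      U s a ⊆ stdSimplex ℝ S)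
    (hirr : Assump1 U)
    (π : S → A → ℝ) (hπ : ∀ s, π s ∈ stdSimplex ℝ A) :
    ∃ (g : ℝ) (h : S → ℝ),
      (∀ s, h s = ∑ a, π s a * (r s a - g + suppF (U s a) h)) ∧
      (∀ s, robAvgR U π r s = g) := by
  have hU' : ∀ s a, IsUncertaintySet (U s a) := fun s a =>
    ⟨(hU s a).1, (hU s a).2.1, (hU s a).2.2.2⟩
  obtain ⟨g, h, hgh⟩ := exists_robustBellman_one_eq_add_const hr hU' hirr hπ
  refine ⟨g, h, fun s => ?_, robAvgR_eq_of_robustBellman_eq hπ hU' hgh⟩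
  rw [sum_mul_sub_add_suppF_eq hπ, hgh, Pi.add_apply, add_sub_cancel_right]

/-- Under Assumption 1, for any stationary policy `π`, the robust
average-reward Bellman equation is solvable, and its gain component is the robust
average reward of `π` (a constant over states). -/
theorem stmt0 {S A : Type*} [Fintype S] [DecidableEq S] [Nonempty S]
    [Fintype A] [Nonempty A]
    (r : S → A → ℝ) (hr : ∀ s a, r s a ∈ Set.Icc (0 : ℝ) 1)
    (U : S → A → Set (S → ℝ))
    (hU : ∀ s a, (U s a).Nonempty ∧ IsCompact (U s a) ∧ Convex ℝ (U s a) ∧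
      U s a ⊆ stdSimplex ℝ S)
    (hirr : Assump1 U)
    (π : S → A → ℝ) (hπ : ∀ s, π s ∈ stdSimplex ℝ A) :
    ∃ (g : ℝ) (h : S → ℝ),
      (∀ s, h s = ∑ a, π s a * (r s a - g + suppF (U s a) h)) ∧
      (∀ s, robAvgR U π r s = g) :=
  stmt0_general r hr U hU hirr π hπ
end

section
/- For every opponent policy ρ : S → Δ(B) and every (s,a) ∈ S × A, the induced uncertainty set (𝒫^ρ)^a_s = { ∑_{b∈B} ρ(b|s) P_b : P_b ∈ 𝒫^{(a,b)}_s for each b } is a nonempty compact convex subset of Δ(S). Moreover, if for every deterministic joint policy d : S → A × B and every kernel P (a choice of P^{(a,b)}_s ∈ 𝒫^{(a,b)}_s for all (s,a,b)) the stochastic matrix with rows (P^{d(s)}_s)_{s∈S} is irreducible, then for every deterministic policy d' : S → A and every induced kernel Q (a choice of Q^a_s ∈ (𝒫^ρ)^a_s for all (s,a)) the stochastic matrix with rows (Q^{d'(s)}_s)_{s∈S} is irreducible. -/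
open scoped BigOperators
open Matrix Filter

/-- The induced uncertainty set
`(U^ρ)^a_s = { ∑_b ρ(b|s) P_b : P_b ∈ U^{(a,b)}_s }`. -/
def inducedSet {S A B : Type*} [Fintype B]
    (U : S → A → B → Set (S → ℝ)) (ρ : S → B → ℝ) (s : S) (a : A) :
    Set (S → ℝ) :=
  {q | ∃ Pb : B → (S → ℝ), (∀ b, Pb b ∈ U s a b) ∧
    q = fun s' => ∑ b, ρ s b * Pb b s'}

/-- The induced reward `r^ρ(s,a) = ∑_b ρ(b|s) r(s,a,b)`. -/
noncomputable def inducedRew {S A B : Type*} [Fintype B]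
    (r : S → A → B → ℝ) (ρ : S → B → ℝ) : S → A → ℝ :=
  fun s a => ∑ b, ρ s b * r s a b

section WeightedSum

variable {ι E : Type*} [Fintype ι] [AddCommGroup E] [Module ℝ E]

def weightedSum (w : ι → ℝ) : (ι → E) →ₗ[ℝ] E :=
  ∑ i, w i • LinearMap.proj i

lemma weightedSum_apply (w : ι → ℝ) (x : ι → E) : weightedSum w x = ∑ i, w i • x i := by
  simp [weightedSum]

lemma convex_weightedSum_image_pi (w : ι → ℝ) {K : ι → Set E} (hK : ∀ i, Convex ℝ (K i)) :
    Convex ℝ (weightedSum w '' Set.univ.pi K) :=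
  (convex_pi fun i _ => hK i).linear_image _

lemma isCompact_weightedSum_image_pi [TopologicalSpace E] [IsTopologicalAddGroup E]
    [ContinuousSMul ℝ E] (w : ι → ℝ) {K : ι → Set E} (hK : ∀ i, IsCompact (K i)) :
    IsCompact (weightedSum w '' Set.univ.pi K) := by
  refine (isCompact_univ_pi hK).image ?_
  rw [show ⇑(weightedSum w : (ι → E) →ₗ[ℝ] E) = fun x => ∑ i, w i • x i from
    funext (weightedSum_apply w)]
  fun_prop

lemma weightedSum_image_pi_subset {w : ι → ℝ} (hw : w ∈ stdSimplex ℝ ι) {K : ι → Set E}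
    {C : Set E} (hC : Convex ℝ C) (hK : ∀ i, K i ⊆ C) :
    weightedSum w '' Set.univ.pi K ⊆ C := by
  rintro _ ⟨x, hx, rfl⟩
  rw [weightedSum_apply]
  exact hC.sum_mem (fun i _ => hw.1 i) hw.2 fun i _ => hK i (hx i (Set.mem_univ i))

end WeightedSum

lemma inducedSet_eq_weightedSum_image {S A B : Type*} [Fintype B]
    (U : S → A → B → Set (S → ℝ)) (ρ : S → B → ℝ) (s : S) (a : A) :
    inducedSet U ρ s a = weightedSum (ρ s) '' Set.univ.pi (U s a) := by
  have hmix : ∀ P : B → S → ℝ, weightedSum (ρ s) P = fun s' => ∑ b, ρ s b * P b s' :=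
    fun P => by ext s'; simp [weightedSum_apply, Finset.sum_apply]
  ext q
  simp only [inducedSet, Set.mem_image, Set.mem_univ_pi, hmix, eq_comm (b := q)]
  rfl

lemma exists_pos_of_mem_stdSimplex {ι : Type*} [Fintype ι] {w : ι → ℝ}
    (hw : w ∈ stdSimplex ℝ ι) : ∃ i, 0 < w i := by
  by_contra! h
  have : ∑ i, w i ≤ 0 := Finset.sum_nonpos fun i _ => h i
  linarith [hw.2]

namespace Matrix

variable {n R : Type*} [Fintype n] [DecidableEq n] [Ring R] [LinearOrder R] [IsStrictOrderedRing R]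

lemma pow_apply_pos_of_pos_imp_pos {M N : Matrix n n R} (hM : ∀ i j, 0 ≤ M i j)
    (hN : ∀ i j, 0 ≤ N i j) (hMN : ∀ i j, 0 < M i j → 0 < N i j) (k : ℕ) (i j : n)
    (hk : 0 < (M ^ k) i j) : 0 < (N ^ k) i j := by
  induction k generalizing j with
  | zero => simpa [one_apply] using hk
  | succ k ih =>
    rw [pow_succ, mul_apply] at hk ⊢
    obtain ⟨l, -, hl⟩ := (Finset.sum_pos_iff_of_nonneg fun l _ =>
      mul_nonneg (pow_apply_nonneg hM k i l) (hM l j)).1 hk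
    have hMk : 0 < (M ^ k) i l := pos_of_mul_pos_left hl (hM l j)
    have hMl : 0 < M l j := pos_of_mul_pos_right hl (pow_apply_nonneg hM k i l)
    exact (Finset.sum_pos_iff_of_nonneg fun l _ =>
      mul_nonneg (pow_apply_nonneg hN k i l) (hN l j)).2
      ⟨l, Finset.mem_univ l, mul_pos (ih l hMk) (hMN l j hMl)⟩

end Matrix

lemma IrredM.of_pos_imp_pos_s4 {S : Type*} [Fintype S] [DecidableEq S] {M N : Matrix S S ℝ}
    (hirr : IrredM M) (hM : ∀ i j, 0 ≤ M i j) (hN : ∀ i j, 0 ≤ N i j)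
    (hMN : ∀ i j, 0 < M i j → 0 < N i j) : IrredM N := fun i j =>
  let ⟨k, hk, hpos⟩ := hirr i j
  ⟨k, hk, Matrix.pow_apply_pos_of_pos_imp_pos hM hN hMN k i j hpos⟩

theorem stmt4_general {S A B : Type*} [Fintype S] [DecidableEq S] [Fintype B]
    (U : S → A → B → Set (S → ℝ))
    (hU : ∀ s a b, (U s a b).Nonempty ∧ IsCompact (U s a b) ∧ Convex ℝ (U s a b) ∧
      U s a b ⊆ stdSimplex ℝ S) :
    (∀ (ρ : S → B → ℝ), (∀ s, ρ s ∈ stdSimplex ℝ B) → ∀ (s : S) (a : A),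
      (inducedSet U ρ s a).Nonempty ∧ IsCompact (inducedSet U ρ s a) ∧
      Convex ℝ (inducedSet U ρ s a) ∧ inducedSet U ρ s a ⊆ stdSimplex ℝ S) ∧
    ((∀ (d : S → A × B) (P : S → A → B → S → ℝ),
        (∀ s a b, P s a b ∈ U s a b) →
        IrredM (Matrix.of fun s s' => P s (d s).1 (d s).2 s')) →
      ∀ (ρ : S → B → ℝ), (∀ s, ρ s ∈ stdSimplex ℝ B) →
      ∀ (d' : S → A) (Q : S → A → S → ℝ),
        (∀ s a, Q s a ∈ inducedSet U ρ s a) →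
        IrredM (Matrix.of fun s s' => Q s (d' s) s')) := by
  constructor
  · intro ρ hρ s a
    rw [inducedSet_eq_weightedSum_image]
    exact ⟨Set.univ_pi_nonempty_iff.2 (fun b => (hU s a b).1) |>.image _,
      isCompact_weightedSum_image_pi _ fun b => (hU s a b).2.1,
      convex_weightedSum_image_pi _ fun b => (hU s a b).2.2.1,
      weightedSum_image_pi_subset (hρ s) (convex_stdSimplex ℝ S) fun b => (hU s a b).2.2.2⟩
  · intro hirr ρ hρ d' Q hQ
    choose b hb using fun s => exists_pos_of_mem_stdSimplex (hρ s)
    choose P hPU hPQ using hQ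
    have hP0 : ∀ s a c s', 0 ≤ P s a c s' := fun s a c => ((hU s a c).2.2.2 (hPU s a c)).1
    have hQP : ∀ s s', Q s (d' s) s' = ∑ c, ρ s c * P s (d' s) c s' := fun s s' => by
      rw [hPQ s (d' s)]
    refine (hirr (fun s => (d' s, b s)) P hPU).of_pos_imp_pos_s4
      (fun s s' => hP0 _ _ _ s') (fun s s' => ?_) fun s s' hpos => ?_
    · simp only [Matrix.of_apply, hQP]
      exact Finset.sum_nonneg fun c _ => mul_nonneg ((hρ s).1 c) (hP0 _ _ _ s')
    · simp only [Matrix.of_apply, hQP]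
      exact (Finset.sum_pos_iff_of_nonneg fun c _ => mul_nonneg ((hρ s).1 c) (hP0 _ _ _ s')).2
        ⟨b s, Finset.mem_univ _, mul_pos (hb s) hpos⟩

/-- The induced uncertainty set is a nonempty compact convex
subset of the simplex; moreover inducing preserves irreducibility. -/
theorem stmt4 {S A B : Type*} [Fintype S] [DecidableEq S] [Nonempty S]
    [Fintype A] [Nonempty A] [Fintype B] [Nonempty B]
    (U : S → A → B → Set (S → ℝ))
    (hU : ∀ s a b, (U s a b).Nonempty ∧ IsCompact (U s a b) ∧ Convex ℝ (U s a b) ∧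
      U s a b ⊆ stdSimplex ℝ S) :
    (∀ (ρ : S → B → ℝ), (∀ s, ρ s ∈ stdSimplex ℝ B) → ∀ (s : S) (a : A),
      (inducedSet U ρ s a).Nonempty ∧ IsCompact (inducedSet U ρ s a) ∧
      Convex ℝ (inducedSet U ρ s a) ∧ inducedSet U ρ s a ⊆ stdSimplex ℝ S) ∧
    ((∀ (d : S → A × B) (P : S → A → B → S → ℝ),
        (∀ s a b, P s a b ∈ U s a b) →
        IrredM (Matrix.of fun s s' => P s (d s).1 (d s).2 s')) →
      ∀ (ρ : S → B → ℝ), (∀ s, ρ s ∈ stdSimplex ℝ B) →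
      ∀ (d' : S → A) (Q : S → A → S → ℝ),
        (∀ s a, Q s a ∈ inducedSet U ρ s a) →
        IrredM (Matrix.of fun s s' => Q s (d' s) s')) :=
  stmt4_general U hU
end

section
/- For any two opponent policies ρ, ρ' : S → Δ(B), every (s,a) ∈ S × A, and every h : S → ℝ, the support functions of the induced uncertainty sets satisfy |σ_{(𝒫^ρ)^a_s}(h) − σ_{(𝒫^{ρ'})^a_s}(h)| ≤ ( ∑_{b∈B} |ρ(b|s) − ρ'(b|s)| ) · max_{s'} |h(s')|. -/
open scoped BigOperators
open Matrix Filter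

/-!
Writing a point of the induced set as `∑_b ρ(b) P_b`, its pairing with `h` is `∑_b ρ(b) ⟪P_b, h⟫`, so
both support functions are infima over the same family of selections `(P_b)_b`. For a fixed selection
the two values differ by `∑_b (ρ(b) - ρ'(b)) ⟪P_b, h⟫`, and each `⟪P_b, h⟫` is bounded by `max |h|`
because `P_b` is a probability vector; infima of two families that are uniformly `d`-close are `d`-close.
-/

open Finset

lemma abs_csInf_image_sub_csInf_image_le {ι : Type*} {T : Set ι} {f g : ι → ℝ} {d : ℝ}
    (hT : T.Nonempty) (hf : BddBelow (f '' T)) (hfg : ∀ x ∈ T, |f x - g x| ≤ d) :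
    |sInf (f '' T) - sInf (g '' T)| ≤ d := by
  obtain ⟨m, hm⟩ := hf
  have hg : BddBelow (g '' T) := ⟨m - d, Set.forall_mem_image.2 fun x hx => by
    linarith [hm (Set.mem_image_of_mem f hx), abs_le.1 (hfg x hx)]⟩
  rw [abs_sub_le_iff]
  constructor
  · rw [sub_le_iff_le_add, ← sub_le_iff_le_add']
    refine le_csInf (hT.image g) (Set.forall_mem_image.2 fun x hx => ?_)
    linarith [csInf_le ⟨m, hm⟩ (Set.mem_image_of_mem f hx), abs_le.1 (hfg x hx)]
  · rw [sub_le_iff_le_add, ← sub_le_iff_le_add']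
    refine le_csInf (hT.image f) (Set.forall_mem_image.2 fun x hx => ?_)
    linarith [csInf_le hg (Set.mem_image_of_mem g hx), abs_le.1 (hfg x hx)]

lemma abs_sum_mul_le_sum_abs_mul {ι : Type*} (s : Finset ι) {w x : ι → ℝ} {M : ℝ}
    (hx : ∀ i ∈ s, |x i| ≤ M) :
    |∑ i ∈ s, w i * x i| ≤ (∑ i ∈ s, |w i|) * M := by
  calc |∑ i ∈ s, w i * x i| ≤ ∑ i ∈ s, |w i| * |x i| := by
        simpa only [abs_mul] using abs_sum_le_sum_abs (fun i => w i * x i) s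
    _ ≤ ∑ i ∈ s, |w i| * M := sum_le_sum fun i hi => by gcongr; exact hx i hi
    _ = (∑ i ∈ s, |w i|) * M := (sum_mul _ _ _).symm

lemma abs_sum_mul_le_iSup_abs_of_mem_stdSimplex {S : Type*} [Fintype S] {p : S → ℝ}
    (hp : p ∈ stdSimplex ℝ S) (h : S → ℝ) :
    |∑ s', p s' * h s'| ≤ ⨆ s', |h s'| := by
  have hle := abs_sum_mul_le_sum_abs_mul (w := p) univ fun s' _ =>
    le_ciSup (Set.finite_range fun t => |h t|).bddAbove s'
  rwa [sum_congr rfl fun s' _ => abs_of_nonneg (hp.1 s'), hp.2, one_mul] at hle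

lemma suppF_inducedSet {S A B : Type*} [Fintype S] [Fintype B] (U : S → A → B → Set (S → ℝ))
    (ρ : S → B → ℝ) (s : S) (a : A) (h : S → ℝ) :
    suppF (inducedSet U ρ s a) h =
      sInf ((fun P : B → S → ℝ => ∑ b, ρ s b * ∑ s', P b s' * h s') '' Set.univ.pi (U s a)) := by
  have hpair : ∀ P : B → S → ℝ,
      ∑ s', (∑ b, ρ s b * P b s') * h s' = ∑ b, ρ s b * ∑ s', P b s' * h s' := fun P => by
    simp only [sum_mul, mul_sum, mul_assoc]
    exact sum_comm
  unfold suppF inducedSet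
  congr 1
  ext x
  simp only [Set.mem_image, Set.mem_ofPred_eq, Set.mem_univ_pi]
  constructor
  · rintro ⟨_, ⟨P, hP, rfl⟩, rfl⟩
    exact ⟨P, hP, (hpair P).symm⟩
  · rintro ⟨P, hP, rfl⟩
    exact ⟨_, ⟨P, hP, rfl⟩, hpair P⟩

theorem stmt6_general {S A B : Type*} [Fintype S] [Fintype B]
    (U : S → A → B → Set (S → ℝ))
    (hU : ∀ s a b, (U s a b).Nonempty ∧ IsCompact (U s a b) ∧
      U s a b ⊆ stdSimplex ℝ S)
    (ρ ρ' : S → B → ℝ)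
    (s : S) (a : A) (h : S → ℝ) :
    |suppF (inducedSet U ρ s a) h - suppF (inducedSet U ρ' s a) h|
      ≤ (∑ b, |ρ s b - ρ' s b|) * ⨆ s' : S, |h s'| := by
  have hbound : ∀ P ∈ Set.univ.pi (U s a), ∀ b ∈ univ, |∑ s', P b s' * h s'| ≤ ⨆ s', |h s'| :=
    fun P hP b _ => abs_sum_mul_le_iSup_abs_of_mem_stdSimplex ((hU s a b).2.2 (hP b trivial)) h
  rw [suppF_inducedSet, suppF_inducedSet]
  refine abs_csInf_image_sub_csInf_image_le (Set.univ_pi_nonempty_iff.2 fun b => (hU s a b).1)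
    ⟨-((∑ b, |ρ s b|) * ⨆ s', |h s'|), Set.forall_mem_image.2 fun P hP =>
      neg_le_of_abs_le (abs_sum_mul_le_sum_abs_mul univ (hbound P hP))⟩ fun P hP => ?_
  rw [← sum_sub_distrib]
  simpa only [sub_mul] using
    abs_sum_mul_le_sum_abs_mul (w := fun b => ρ s b - ρ' s b) univ (hbound P hP)

/-- Lipschitz dependence of the induced support function on the
opponent policy:
`|σ_{(U^ρ)^a_s}(h) − σ_{(U^{ρ'})^a_s}(h)| ≤ (∑_b |ρ(b|s) − ρ'(b|s)|) · max_{s'} |h(s')|`. -/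
theorem stmt6 {S A B : Type*} [Fintype S] [DecidableEq S] [Nonempty S]
    [Fintype A] [Nonempty A] [Fintype B] [Nonempty B]
    (U : S → A → B → Set (S → ℝ))
    (hU : ∀ s a b, (U s a b).Nonempty ∧ IsCompact (U s a b) ∧
      U s a b ⊆ stdSimplex ℝ S)
    (ρ ρ' : S → B → ℝ)
    (hρ : ∀ s, ρ s ∈ stdSimplex ℝ B) (hρ' : ∀ s, ρ' s ∈ stdSimplex ℝ B)
    (s : S) (a : A) (h : S → ℝ) :
    |suppF (inducedSet U ρ s a) h - suppF (inducedSet U ρ' s a) h|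
      ≤ (∑ b, |ρ s b - ρ' s b|) * ⨆ s' : S, |h s'| :=
  stmt6_general U hU ρ ρ' s a h
end
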